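/- arXiv:1910.13545 — 7 statements merged into one kernel-verified Lean document; each statement's English description precedes it below -/
import Mathlib

section
/- For every α ∈ {0,1,…,n}, every commutative ring R, and every z ∈ R, the matrix g_α(z) satisfies g_α(z)ᵀ · J · g_α(z) = J and det g_α(z) = 1, where J is the N×N matrix with 1's on the antidiagonal and 0's elsewhere. In particular each g_α(z) lies in SO(2n+2) with respect to the quadratic form J. -/
/-! With `c = -z`, `g_α(z)` is the permutation matrix of the double transposition
`σ = (p q)(q' p')` corrected by `c (E_pp - E_q'q')`, where `x' = 2n+1-x` is the mirror index
(0-based) and `(p, q) = (α-1, α)` for `α ≥ 1`, `(n-1, n+1)` for `α = 0`. It factors as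
`(1 + X) P_σ` with `X = c (E_pq - E_q'p')`. Since `σ` commutes with `x ↦ x'`, `P_σ` preserves
`J = P_{x ↦ x'}`; and `1 + X` preserves `J` because `Xᵀ J = -J X` and `X² = 0`. Finally
`1 + X` is a product of two transvections and `σ` is even, so the determinant is `1`. -/

open Matrix MvPolynomial

/-- For `1 ≤ α ≤ n`, the `(2n+2) × (2n+2)` identity matrix modified by replacing the
`2 × 2` diagonal block in rows/columns `{α, α+1}` (1-based) by `[[-z,1],[1,0]]` and the
`2 × 2` diagonal block in rows/columns `{2n+2-α, 2n+3-α}` by `[[z,1],[1,0]]`; for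
`α = 0`, the identity matrix with the central `4 × 4` diagonal block in rows/columns
`{n, n+1, n+2, n+3}` replaced by `[[-z,0,1,0],[0,z,0,1],[1,0,0,0],[0,1,0,0]]`. -/
def gMat {R : Type*} [CommRing R] (n : ℕ) (α : ℕ) (z : R) :
    Matrix (Fin (2 * n + 2)) (Fin (2 * n + 2)) R :=
  Matrix.of fun i j =>
    let i' := (i : ℕ) + 1
    let j' := (j : ℕ) + 1
    if α = 0 then
      if i' = n ∧ j' = n then -z
      else if i' = n + 1 ∧ j' = n + 1 then z
      else if (i' = n ∧ j' = n + 2) ∨ (i' = n + 1 ∧ j' = n + 3) ∨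
              (i' = n + 2 ∧ j' = n) ∨ (i' = n + 3 ∧ j' = n + 1) then 1
      else if i' = j' ∧ ¬(i' = n ∨ i' = n + 1 ∨ i' = n + 2 ∨ i' = n + 3) then 1
      else 0
    else
      if i' = α ∧ j' = α then -z
      else if i' = 2 * n + 2 - α ∧ j' = 2 * n + 2 - α then z
      else if (i' = α ∧ j' = α + 1) ∨ (i' = α + 1 ∧ j' = α) ∨
              (i' = 2 * n + 2 - α ∧ j' = 2 * n + 3 - α) ∨
              (i' = 2 * n + 3 - α ∧ j' = 2 * n + 2 - α) then 1
      else if i' = j' ∧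
          ¬(i' = α ∨ i' = α + 1 ∨ i' = 2 * n + 2 - α ∨ i' = 2 * n + 3 - α) then 1
      else 0

/-- The descending word `(a, a-1, …, b)`. -/
def descWord (a b : ℕ) : List ℕ := (List.range (a + 1 - b)).reverse.map (· + b)

/-- The ascending word `(a, a+1, …, b)`. -/
def ascWord (a b : ℕ) : List ℕ := (List.range (b + 1 - a)).map (· + a)

/-- `Q_1 = (0, n-1, n-2, …, 2, 1, 2, 3, …, n-1, 0)`. -/
def wordQ1 (n : ℕ) : List ℕ := 0 :: (descWord (n - 1) 1 ++ ascWord 2 (n - 1) ++ [0])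

/-- `Q_2 = (n, n-1, …, 2, 1, 2, …, n-1, n)`. -/
def wordQ2 (n : ℕ) : List ℕ := descWord n 1 ++ ascWord 2 n

/-- `Q^{(i)} = (i, i-1, …, 1, 2, 3, …, n-1, 0, n, n-1, …, i+1)`. -/
def wordQi (n i : ℕ) : List ℕ :=
  descWord i 1 ++ ascWord 2 (n - 1) ++ [0] ++ descWord n (i + 1)

/-- `M_Q = g_{α_1}(z_1) · g_{α_2}(z_2) ⋯ g_{α_L}(z_L)` over `ℤ[z_1, z_2, …]`,
where `z_j` is the variable `X j`. -/
noncomputable def MQ (n : ℕ) (Q : List ℕ) :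
    Matrix (Fin (2 * n + 2)) (Fin (2 * n + 2)) (MvPolynomial ℕ ℤ) :=
  (List.ofFn (fun l : Fin Q.length => gMat n (Q.get l) (X ((l : ℕ) + 1)))).prod

/-- The determinant of the northwest `α × α` submatrix. -/
noncomputable def nwDet {n : ℕ}
    (M : Matrix (Fin (2 * n + 2)) (Fin (2 * n + 2)) (MvPolynomial ℕ ℤ))
    (α : ℕ) (h : α ≤ 2 * n + 2) : MvPolynomial ℕ ℤ :=
  (M.submatrix (Fin.castLE h) (Fin.castLE h)).det

/-- The `(2n+2) × (2n+2)` matrix with `1`'s on the antidiagonal and `0`'s elsewhere. -/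
def antidiagJ (n : ℕ) (R : Type*) [CommRing R] :
    Matrix (Fin (2 * n + 2)) (Fin (2 * n + 2)) R :=
  Matrix.of fun i j => if (i : ℕ) + (j : ℕ) = 2 * n + 1 then 1 else 0

open Equiv

section

variable {ι R : Type*} [CommRing R]

theorem nodup_four_iff {a b c d : ι} :
    [a, b, c, d].Nodup ↔ (a ≠ b ∧ a ≠ c ∧ a ≠ d) ∧ (b ≠ c ∧ b ≠ d) ∧ c ≠ d := by
  simp

section Form

variable [Fintype ι]

def PreservesForm (J M : Matrix ι ι R) : Prop := Mᵀ * J * M = J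

theorem PreservesForm.mul {J M N : Matrix ι ι R} (hM : PreservesForm J M)
    (hN : PreservesForm J N) : PreservesForm J (M * N) :=
  calc (M * N)ᵀ * J * (M * N) = Nᵀ * (Mᵀ * J * M) * N := by
        simp only [transpose_mul, Matrix.mul_assoc]
    _ = J := by rw [hM, hN]

variable [DecidableEq ι]

theorem preservesForm_one_add_of_mul_self_eq_zero {J X : Matrix ι ι R}
    (hX : Xᵀ * J = -(J * X)) (hXX : X * X = 0) : PreservesForm J (1 + X) := by
  have hXJX : Xᵀ * J * X = 0 := by
    rw [hX, neg_mul, Matrix.mul_assoc, hXX, Matrix.mul_zero, neg_zero]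
  rw [PreservesForm, transpose_add, transpose_one, add_mul, add_mul, mul_add, mul_add, hXJX, hX]
  simp only [one_mul, mul_one, add_zero]
  abel

theorem preservesForm_permMatrix_of_commute {σ τ : Perm ι} (h : Commute σ τ) :
    PreservesForm (τ.permMatrix R) (σ.permMatrix R) := by
  rw [PreservesForm, transpose_permMatrix, ← permMatrix_mul, ← permMatrix_mul, ← mul_assoc, h.eq,
    mul_inv_cancel_right]

theorem single_mul_permMatrix (i j : ι) (c : R) (σ : Perm ι) :
    single i j c * σ.permMatrix R = single i (σ j) c := by
  rw [PEquiv.mul_toMatrix_toPEquiv]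
  exact submatrix_single_equiv (.refl ι) σ.symm i j c

theorem permMatrix_mul_single (i j : ι) (c : R) (σ : Perm ι) :
    σ.permMatrix R * single i j c = single (σ.symm i) j c := by
  rw [PEquiv.toMatrix_toPEquiv_mul]
  exact submatrix_single_equiv σ (.refl ι) i j c

theorem preservesForm_one_add_single_sub_single {ρ : Perm ι} (hρ : Function.Involutive ρ)
    {p q : ι} (hpq : p ≠ q) (hp : p ≠ ρ p) (hq : q ≠ ρ q) (c : R) :
    PreservesForm (ρ.permMatrix R) (1 + (single p q c - single (ρ q) (ρ p) c)) := by
  have hρ_symm : ∀ x, ρ.symm x = ρ x := fun x => ρ.symm_apply_eq.mpr (hρ x).symm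
  refine preservesForm_one_add_of_mul_self_eq_zero ?_ ?_
  · rw [transpose_sub, transpose_single, transpose_single, Matrix.sub_mul, Matrix.mul_sub,
      single_mul_permMatrix, single_mul_permMatrix, permMatrix_mul_single, permMatrix_mul_single,
      hρ_symm, hρ_symm, hρ, neg_sub]
  · simp only [Matrix.sub_mul, Matrix.mul_sub, single_mul_single_of_ne _ _ _ _ hpq.symm,
      single_mul_single_of_ne _ _ _ _ hq, single_mul_single_of_ne _ _ _ _ hp.symm,
      single_mul_single_of_ne _ _ _ _ (ρ.injective.ne hpq)]
    simp

theorem det_one_add_single_sub_single {p q r s : ι} (hpq : p ≠ q) (hqr : q ≠ r) (hrs : r ≠ s)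
    (c : R) : (1 + (single p q c - single r s c)).det = 1 := by
  have : 1 + (single p q c - single r s c) = transvection p q c * transvection r s (-c) := by
    simp only [transvection, mul_add, add_mul, one_mul, mul_one,
      single_mul_single_of_ne _ _ _ _ hqr, add_zero, sub_eq_add_neg, single_neg, add_assoc]
  rw [this, det_mul, det_transvection_of_ne _ _ hpq, det_transvection_of_ne _ _ hrs, one_mul]

end Form

section TwoBlock

variable [DecidableEq ι]

theorem sign_swap_mul_swap [Fintype ι] {p q r s : ι} (hpq : p ≠ q) (hrs : r ≠ s) :
    Perm.sign (swap p q * swap r s) = 1 := by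
  rw [Perm.sign_mul, Perm.sign_swap hpq, Perm.sign_swap hrs]
  rfl

theorem commute_swap_mul_swap {ρ : Perm ι} (hρ : Function.Involutive ρ) {p q : ι}
    (h : [p, q, ρ q, ρ p].Nodup) : Commute (swap p q * swap (ρ q) (ρ p)) ρ := by
  have hr : swap (ρ q) (ρ p) = ρ * swap q p * ρ⁻¹ := swap_apply_apply ρ q p
  have hs : swap p q = ρ * swap (ρ p) (ρ q) * ρ⁻¹ := by rw [← swap_apply_apply, hρ, hρ]
  calc swap p q * swap (ρ q) (ρ p) * ρ = swap (ρ q) (ρ p) * swap p q * ρ := by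
        rw [(Perm.disjoint_swap_swap h).commute.eq]
    _ = ρ * (swap q p * swap (ρ p) (ρ q)) := by
        rw [hr, hs]
        group
    _ = ρ * (swap p q * swap (ρ q) (ρ p)) := by
        rw [swap_comm q, swap_comm (ρ p)]

/-- The identity with the blocks `[[c, 1], [1, 0]]` on rows/columns `{p, q}` and
`[[-c, 1], [1, 0]]` on rows/columns `{r, s}`. -/
def twoBlockMatrix (p q r s : ι) (c : R) : Matrix ι ι R :=
  (swap p q * swap r s).permMatrix R + single p p c - single r r c

section

variable {p q r s : ι} (h : [p, q, r, s].Nodup)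
include h

theorem twoBlockMatrix_apply (c : R) (i j : ι) :
    twoBlockMatrix p q r s c i j =
      if i = p ∧ j = p then c
      else if i = r ∧ j = r then -c
      else if (i = p ∧ j = q) ∨ (i = q ∧ j = p) ∨ (i = r ∧ j = s) ∨ (i = s ∧ j = r) then 1
      else if i = j ∧ ¬(i = p ∨ i = q ∨ i = r ∨ i = s) then 1
      else 0 := by
  obtain ⟨⟨hpq, hpr, hps⟩, ⟨hqr, hqs⟩, hrs⟩ := nodup_four_iff.mp h
  have hcases : ∀ x, x = p ∨ x = q ∨ x = r ∨ x = s ∨ (x ≠ p ∧ x ≠ q ∧ x ≠ r ∧ x ≠ s) := by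
    intro x; tauto
  rcases hcases i with rfl | rfl | rfl | rfl | ⟨hip, hiq, hir, his⟩ <;>
  rcases hcases j with rfl | rfl | rfl | rfl | ⟨hjp, hjq, hjr, hjs⟩ <;>
  clear hcases <;>
  simp [twoBlockMatrix, PEquiv.toMatrix_apply, swap_apply_of_ne_of_ne, *, Ne.symm, -permMatrix_mul]

variable [Fintype ι]

theorem twoBlockMatrix_eq_mul (c : R) :
    twoBlockMatrix p q r s c =
      (1 + (single p q c - single r s c)) * (swap p q * swap r s).permMatrix R := by
  obtain ⟨⟨-, hpr, -⟩, ⟨hqr, hqs⟩, -⟩ := nodup_four_iff.mp h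
  have hσq : (swap p q * swap r s) q = p := by
    rw [Perm.mul_apply, swap_apply_of_ne_of_ne hqr hqs, swap_apply_right]
  have hσs : (swap p q * swap r s) s = r := by
    rw [Perm.mul_apply, swap_apply_right, swap_apply_of_ne_of_ne (Ne.symm hpr) (Ne.symm hqr)]
  rw [add_mul, one_mul, Matrix.sub_mul, single_mul_permMatrix, single_mul_permMatrix, hσq, hσs,
    twoBlockMatrix, add_sub_assoc]

theorem det_twoBlockMatrix (c : R) : (twoBlockMatrix p q r s c).det = 1 := by
  obtain ⟨⟨hpq, -, -⟩, ⟨hqr, -⟩, hrs⟩ := nodup_four_iff.mp h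
  rw [twoBlockMatrix_eq_mul h, det_mul, det_one_add_single_sub_single hpq hqr hrs, det_permutation,
    sign_swap_mul_swap hpq hrs, one_mul, Units.val_one, Int.cast_one]

end

theorem preservesForm_twoBlockMatrix [Fintype ι] {ρ : Perm ι} (hρ : Function.Involutive ρ) {p q : ι}
    (h : [p, q, ρ q, ρ p].Nodup) (c : R) :
    PreservesForm (ρ.permMatrix R) (twoBlockMatrix p q (ρ q) (ρ p) c) := by
  obtain ⟨⟨hpq, -, hp⟩, ⟨hq, -⟩, -⟩ := nodup_four_iff.mp h
  rw [twoBlockMatrix_eq_mul h]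
  exact (preservesForm_one_add_single_sub_single hρ hpq hp hq c).mul
    (preservesForm_permMatrix_of_commute (commute_swap_mul_swap hρ h))

end TwoBlock

theorem antidiagJ_eq_permMatrix_revPerm (n : ℕ) :
    antidiagJ n R = (Fin.revPerm : Perm (Fin (2 * n + 2))).permMatrix R := by
  ext i j
  have := i.isLt
  simp only [antidiagJ, of_apply, PEquiv.toMatrix_apply, toPEquiv_apply, Option.mem_def,
    Option.some.injEq, Fin.revPerm_apply, Fin.ext_iff, Fin.val_rev]
  exact if_congr (by omega) rfl rfl

theorem exists_gMat_eq_twoBlockMatrix {n α : ℕ} (hn : n ≠ 0) (hα : α ≤ n) (z : R) :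
    ∃ p q : Fin (2 * n + 2), [p, q, Fin.revPerm q, Fin.revPerm p].Nodup ∧
      gMat n α z = twoBlockMatrix p q (Fin.revPerm q) (Fin.revPerm p) (-z) := by
  rcases eq_or_ne α 0 with h0 | h0 <;>
    [refine ⟨⟨n - 1, by omega⟩, ⟨n + 1, by omega⟩, ?_⟩; refine ⟨⟨α - 1, by omega⟩, ⟨α, by omega⟩, ?_⟩]
  all_goals
    refine (fun h => ⟨h, ?_⟩) (nodup_four_iff.mpr (by
      simp only [ne_eq, Fin.ext_iff, Fin.revPerm_apply, Fin.val_rev]; omega))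
    ext i j
    have := i.isLt
    have := j.isLt
    rw [twoBlockMatrix_apply h]
    simp only [gMat, of_apply, h0, ↓reduceIte, neg_neg, Fin.revPerm_apply, Fin.ext_iff, Fin.val_rev]
    exact if_congr (by omega) rfl <| if_congr (by omega) rfl <| if_congr (by omega) rfl <|
      if_congr (by omega) rfl rfl

end

/-- for every `α ∈ {0,1,…,n}`, every commutative ring `R` and every
`z ∈ R`, the matrix `g_α(z)` satisfies `g_α(z)ᵀ · J · g_α(z) = J` and
`det (g_α(z)) = 1`; in particular `g_α(z) ∈ SO(2n+2)` for the form `J`. -/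
theorem gMat_transpose_J_gMat_eq_J_and_det_eq_one
    {R : Type*} [CommRing R] (n : ℕ) (hn : 2 ≤ n) (α : ℕ) (hα : α ≤ n) (z : R) :
    (gMat n α z)ᵀ * antidiagJ n R * gMat n α z = antidiagJ n R ∧
    (gMat n α z).det = 1 := by
  obtain ⟨p, q, h, hg⟩ := exists_gMat_eq_twoBlockMatrix (by omega : n ≠ 0) hα z
  rw [hg, antidiagJ_eq_permMatrix_revPerm]
  exact ⟨preservesForm_twoBlockMatrix Fin.rev_involutive h _, det_twoBlockMatrix h _⟩
end

section
/- Let M = M_{Q_1} be the product g_0(z_1)·g_{n-1}(z_2)···g_1(z_n)···g_{n-1}(z_{2n-2})·g_0(z_{2n-1}) over the polynomial ring ℤ[z_1,…,z_{2n-1}] associated to the word Q_1 = (0, n-1, n-2, …, 2, 1, 2, 3, …, n-1, 0). Then for every 1 ≤ α ≤ n, the determinant of the northwest α×α submatrix of M (rows and columns {1,…,α}) equals -(z_n + Σ_{k=1}^{α-1} z_{n-k} z_{n+k}). (Computational core of Proposition 2.) -/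
open Matrix MvPolynomial

/-!
Each `g_α` sends every standard basis row to a basis row, except the rows through a diagonal
entry `∓z`, which go to `∓z e_p + e_q`. A basis row can therefore be pushed through the word
`Q₁` letter by letter: `e₀` ends as `e_{n+1} - z_n e₀ - z_{n+1} e₁ - ⋯ - z_{2n-1} e_{n-1}`, and
for `1 ≤ i < n` the row `e_i` ends as `e_i - z_{n-i} e₀` (for `i = n - 1` by a detour through
`e_{n+1}` made by the two letters `0`). So the northwest `n × n` corner of `M` is an arrowhead
matrix whose body is the identity, and the Schur complement of that body gives its leading
minors.
-/

theorem Matrix.det_eq_sub_sum_of_submatrix_succ_succ_eq_one {R : Type*} [CommRing R] {m : ℕ}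
    {M : Matrix (Fin (m + 1)) (Fin (m + 1)) R} (h : M.submatrix Fin.succ Fin.succ = 1) :
    M.det = M 0 0 - ∑ i : Fin m, M 0 i.succ * M i.succ 0 := by
  let e := (finSuccEquiv m).trans (Equiv.optionEquivSumPUnit.{0} (Fin m))
  rw [← det_reindex_self e, ← fromBlocks_toBlocks (reindex e e M)]
  have h₁₁ : (reindex e e M).toBlocks₁₁ = 1 := by
    rw [← h]; ext i j; simp [e, toBlocks₁₁]
  rw [h₁₁, det_fromBlocks_one₁₁, det_unique]
  simp [e, toBlocks₁₂, toBlocks₂₁, toBlocks₂₂, Matrix.mul_apply]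

section Words

theorem descWord_succ {a b : ℕ} (h : b ≤ a + 1) :
    descWord (a + 1) b = (a + 1) :: descWord a b := by
  rw [descWord, descWord, show a + 1 + 1 - b = a + 1 - b + 1 by omega, List.range_succ,
    List.reverse_append, List.reverse_singleton, List.singleton_append, List.map_cons]
  congr 1
  omega

theorem descWord_zero_one : descWord 0 1 = [] := rfl

theorem mem_descWord {a b x : ℕ} : x ∈ descWord a b ↔ b ≤ x ∧ x ≤ a := by
  simp only [descWord, List.mem_map, List.mem_reverse, List.mem_range]
  constructor
  · rintro ⟨y, hy, rfl⟩; omega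
  · rintro ⟨h₁, h₂⟩; exact ⟨x - b, by omega, by omega⟩

theorem length_descWord (a b : ℕ) : (descWord a b).length = a + 1 - b := by
  simp [descWord]

theorem ascWord_add_one_right {a b : ℕ} (h : a ≤ b + 1) :
    ascWord a (b + 1) = ascWord a b ++ [b + 1] := by
  rw [ascWord, ascWord, show b + 1 + 1 - a = b + 1 - a + 1 by omega, List.range_succ,
    List.map_append, List.map_singleton]
  congr 2
  omega

theorem ascWord_self_add_one (a : ℕ) : ascWord (a + 1) a = [] := by
  simp [ascWord]

theorem mem_ascWord {a b x : ℕ} : x ∈ ascWord a b ↔ a ≤ x ∧ x ≤ b := by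
  simp only [ascWord, List.mem_map, List.mem_range]
  constructor
  · rintro ⟨y, hy, rfl⟩; omega
  · rintro ⟨h₁, h₂⟩; exact ⟨x - a, by omega, by omega⟩

theorem length_ascWord (a b : ℕ) : (ascWord a b).length = b + 1 - a := by
  simp [ascWord]

end Words

section BasisRows

variable {R : Type*} [CommRing R]

/-- The standard basis row `e_k`, indexed by a natural number so that no bound proofs have to
be carried around; it is `0` when `N ≤ k`. Rows are `0`-based, so `g_α` (`α ≥ 1`) acts on the
rows `α - 1, α` and `2n + 1 - α, 2n + 2 - α`. -/
def natSingle {N : ℕ} (k : ℕ) : Fin N → R := fun j => if (j : ℕ) = k then 1 else 0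

theorem natSingle_vecMul {N k : ℕ} (hk : k < N) (M : Matrix (Fin N) (Fin N) R) :
    natSingle k ᵥ* M = M ⟨k, hk⟩ := by
  ext j
  have hk' (i : Fin N) : (i : ℕ) = k ↔ i = ⟨k, hk⟩ := by simp [Fin.ext_iff]
  simp [natSingle, vecMul, dotProduct, ite_mul, hk']

theorem natSingle_of_le {N k : ℕ} (hk : N ≤ k) : (natSingle k : Fin N → R) = 0 := by
  ext j
  simp only [natSingle, Pi.zero_apply, ite_eq_right_iff]
  omega

theorem natSingle_vecMul_gMat_of_ne {n a k : ℕ} (ha : a ≠ 0) (h₁ : k + 1 ≠ a) (h₂ : k ≠ a)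
    (h₃ : k + a ≠ 2 * n + 1) (h₄ : k + a ≠ 2 * n + 2) (c : R) :
    natSingle k ᵥ* gMat n a c = natSingle k := by
  rcases lt_or_ge k (2 * n + 2) with hk | hk
  · rw [natSingle_vecMul hk]
    ext j
    simp only [gMat, natSingle, of_apply, if_neg ha]
    split_ifs <;> first | rfl | omega
  · simp [natSingle_of_le hk]

theorem natSingle_vecMul_gMat_succ_self {n a : ℕ} (ha : a < n) (c : R) :
    natSingle a ᵥ* gMat n (a + 1) c = -c • natSingle a + natSingle (a + 1) := by
  rw [natSingle_vecMul (by omega)]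
  ext j
  simp only [gMat, natSingle, of_apply, Pi.add_apply, Pi.smul_apply, smul_eq_mul,
    Nat.add_one_ne_zero, if_false, true_and]
  split_ifs <;> first | rfl | omega | simp_all

theorem natSingle_succ_vecMul_gMat_succ {n a : ℕ} (ha : a < n) (c : R) :
    natSingle (a + 1) ᵥ* gMat n (a + 1) c = natSingle a := by
  rw [natSingle_vecMul (by omega)]
  ext j
  simp only [gMat, natSingle, of_apply, Nat.add_one_ne_zero, if_false, true_and]
  split_ifs <;> first | rfl | omega | simp_all

theorem natSingle_vecMul_gMat_zero_of_ne {n k : ℕ} (h₁ : k + 1 ≠ n) (h₂ : k ≠ n)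
    (h₃ : k ≠ n + 1) (h₄ : k ≠ n + 2) (c : R) :
    natSingle k ᵥ* gMat n 0 c = natSingle k := by
  rcases lt_or_ge k (2 * n + 2) with hk | hk
  · rw [natSingle_vecMul hk]
    ext j
    simp only [gMat, natSingle, of_apply, if_true]
    split_ifs <;> first | rfl | omega
  · simp [natSingle_of_le hk]

theorem natSingle_sub_one_vecMul_gMat_zero {n : ℕ} (hn : 1 ≤ n) (c : R) :
    natSingle (n - 1) ᵥ* gMat n 0 c = -c • natSingle (n - 1) + natSingle (n + 1) := by
  rw [natSingle_vecMul (by omega)]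
  ext j
  simp only [gMat, natSingle, of_apply, if_true, Pi.add_apply, Pi.smul_apply, smul_eq_mul]
  split_ifs <;> first | rfl | omega | simp_all

theorem natSingle_add_one_vecMul_gMat_zero {n : ℕ} (hn : 1 ≤ n) (c : R) :
    natSingle (n + 1) ᵥ* gMat n 0 c = natSingle (n - 1) := by
  rw [natSingle_vecMul (by omega)]
  ext j
  simp only [gMat, natSingle, of_apply, if_true]
  split_ifs <;> first | rfl | omega | simp_all

end BasisRows

section WordProducts

variable {R : Type*} [CommRing R]

def gProd (n : ℕ) (z : ℕ → R) (k : ℕ) : List ℕ → Matrix (Fin (2 * n + 2)) (Fin (2 * n + 2)) R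
  | [] => 1
  | a :: Q => gMat n a (z k) * gProd n z (k + 1) Q

variable {n : ℕ} {z : ℕ → R}

@[simp] theorem gProd_nil (k : ℕ) : gProd n z k [] = 1 := rfl

theorem gProd_cons (k a : ℕ) (Q : List ℕ) :
    gProd n z k (a :: Q) = gMat n a (z k) * gProd n z (k + 1) Q := rfl

theorem gProd_append (k : ℕ) (Q₁ Q₂ : List ℕ) :
    gProd n z k (Q₁ ++ Q₂) = gProd n z k Q₁ * gProd n z (k + Q₁.length) Q₂ := by
  induction Q₁ generalizing k with
  | nil => simp
  | cons a Q ih =>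
    rw [List.cons_append, gProd_cons, gProd_cons, ih, mul_assoc, List.length_cons,
      add_right_comm, add_assoc]

theorem vecMul_gProd_eq_self {v : Fin (2 * n + 2) → R} {Q : List ℕ}
    (h : ∀ a ∈ Q, ∀ c, v ᵥ* gMat n a c = v) (k : ℕ) : v ᵥ* gProd n z k Q = v := by
  induction Q generalizing k with
  | nil => simp
  | cons a Q ih =>
    rw [gProd_cons, ← vecMul_vecMul, h a List.mem_cons_self,
      ih (fun b hb => h b (List.mem_cons_of_mem a hb))]

theorem natSingle_vecMul_gProd_eq_self {k : ℕ} {Q : List ℕ}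
    (hQ : ∀ x ∈ Q, 1 ≤ x ∧ x ≤ n ∧ (k + 1 < x ∨ x < k ∧ k + x ≤ 2 * n)) (m : ℕ) :
    natSingle k ᵥ* gProd n z m Q = natSingle k :=
  vecMul_gProd_eq_self (fun x hx _ => by
    have := hQ x hx
    exact natSingle_vecMul_gMat_of_ne (by omega) (by omega) (by omega) (by omega) (by omega) _) m

theorem natSingle_vecMul_gProd_descWord_self {a : ℕ} (ha : a ≤ n) (k : ℕ) :
    natSingle a ᵥ* gProd n z k (descWord a 1) = (natSingle 0 : Fin (2 * n + 2) → R) := by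
  induction a generalizing k with
  | zero => simp [descWord_zero_one]
  | succ a ih =>
    rw [descWord_succ (by omega), gProd_cons, ← vecMul_vecMul,
      natSingle_succ_vecMul_gMat_succ (by omega), ih (by omega)]

theorem natSingle_vecMul_gProd_descWord_of_lt {i a : ℕ} (hi : i < a) (ha : a ≤ n) (k : ℕ) :
    natSingle i ᵥ* gProd n z k (descWord a 1) =
      natSingle (i + 1) - z (k + a - 1 - i) • natSingle 0 := by
  induction a, hi using Nat.le_induction generalizing k with
  | base =>
    rw [descWord_succ (by omega), gProd_cons, ← vecMul_vecMul,
      natSingle_vecMul_gMat_succ_self (by omega), add_vecMul, smul_vecMul,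
      natSingle_vecMul_gProd_descWord_self (by omega),
      natSingle_vecMul_gProd_eq_self (fun x hx => by rw [mem_descWord] at hx; omega),
      show k + (i + 1) - 1 - i = k by omega, neg_smul, neg_add_eq_sub]
  | succ a hia ih =>
    rw [descWord_succ (by omega), gProd_cons, ← vecMul_vecMul,
      natSingle_vecMul_gMat_of_ne (by omega) (by omega) (by omega) (by omega) (by omega),
      ih (by omega), show k + 1 + a - 1 - i = k + (a + 1) - 1 - i by omega]

theorem natSingle_succ_vecMul_gProd_ascWord {i a b : ℕ} (ha : 1 ≤ a) (hai : a ≤ i + 1)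
    (hib : i + 1 ≤ b) (hb : b ≤ n) (k : ℕ) :
    natSingle (i + 1) ᵥ* gProd n z k (ascWord a b) = (natSingle i : Fin (2 * n + 2) → R) := by
  induction b, hib using Nat.le_induction with
  | base =>
    rw [ascWord_add_one_right hai, gProd_append, ← vecMul_vecMul,
      natSingle_vecMul_gProd_eq_self (fun x hx => by rw [mem_ascWord] at hx; omega),
      gProd_cons, gProd_nil, mul_one, natSingle_succ_vecMul_gMat_succ (by omega)]
  | succ b hib ih =>
    rw [ascWord_add_one_right (by omega), gProd_append, ← vecMul_vecMul, ih (by omega),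
      gProd_cons, gProd_nil, mul_one,
      natSingle_vecMul_gMat_of_ne (by omega) (by omega) (by omega) (by omega) (by omega)]

open Finset

theorem vecMul_gMat_succ_of_sub_sum {s : ℕ} (hs : s < n) (w : ℕ → R) :
    (natSingle s - ∑ j ∈ range s, w j • natSingle j) ᵥ* gMat n (s + 1) (w s) =
      (natSingle (s + 1) - ∑ j ∈ range (s + 1), w j • natSingle j : Fin (2 * n + 2) → R) := by
  have hfix : ∀ j ∈ range s, (w j • natSingle j) ᵥ* gMat n (s + 1) (w s) =
      (w j • natSingle j : Fin (2 * n + 2) → R) := fun j hj => by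
    rw [mem_range] at hj
    rw [smul_vecMul, natSingle_vecMul_gMat_of_ne (by omega) (by omega) (by omega) (by omega)
      (by omega)]
  rw [sub_vecMul, sum_vecMul, sum_congr rfl hfix, natSingle_vecMul_gMat_succ_self hs,
    sum_range_succ]
  module

theorem vecMul_gProd_ascWord_of_sub_sum {s b : ℕ} (hsb : s ≤ b) (hb : b ≤ n) (d : ℕ) :
    (natSingle s - ∑ j ∈ range s, z (d + j) • natSingle j) ᵥ*
        gProd n z (d + s) (ascWord (s + 1) b) =
      (natSingle b - ∑ j ∈ range b, z (d + j) • natSingle j : Fin (2 * n + 2) → R) := by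
  induction b, hsb using Nat.le_induction with
  | base => rw [ascWord_self_add_one, gProd_nil, vecMul_one]
  | succ b hsb ih =>
    rw [ascWord_add_one_right (by omega), gProd_append, ← vecMul_vecMul, ih (by omega),
      gProd_cons, gProd_nil, mul_one, length_ascWord,
      show d + s + (b + 1 - (s + 1)) = d + b by omega,
      vecMul_gMat_succ_of_sub_sum (w := fun j => z (d + j)) (by omega)]

theorem vecMul_gMat_zero_of_sub_sum (hn : 2 ≤ n) (w : ℕ → R) :
    (natSingle (n - 1) - ∑ j ∈ range (n - 1), w j • natSingle j) ᵥ* gMat n 0 (w (n - 1)) =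
      (natSingle (n + 1) - ∑ j ∈ range n, w j • natSingle j : Fin (2 * n + 2) → R) := by
  have hfix : ∀ j ∈ range (n - 1), (w j • natSingle j) ᵥ* gMat n 0 (w (n - 1)) =
      (w j • natSingle j : Fin (2 * n + 2) → R) := fun j hj => by
    rw [mem_range] at hj
    rw [smul_vecMul, natSingle_vecMul_gMat_zero_of_ne (by omega) (by omega) (by omega)
      (by omega)]
  obtain ⟨m, rfl⟩ : ∃ m, n = m + 1 := ⟨n - 1, by omega⟩
  rw [sub_vecMul, sum_vecMul, sum_congr rfl hfix, natSingle_sub_one_vecMul_gMat_zero (by omega)]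
  simp only [Nat.add_sub_cancel, sum_range_succ]
  module

end WordProducts

theorem MQ_eq_gProd (n : ℕ) (Q : List ℕ) : MQ n Q = gProd n X 1 Q := by
  suffices h : ∀ k, (List.ofFn fun l : Fin Q.length => gMat n (Q.get l) (X ((l : ℕ) + k))).prod
      = gProd n X k Q from h 1
  induction Q with
  | nil => simp
  | cons a Q ih =>
    intro k
    simp [List.ofFn_succ, gProd_cons, ← ih (k + 1), add_assoc, add_comm 1]

section WordQ1

variable {R : Type*} [CommRing R] {n : ℕ} {z : ℕ → R}

open Finset

theorem gProd_wordQ1 (hn : 2 ≤ n) :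
    gProd n z 1 (wordQ1 n) = gMat n 0 (z 1) * gProd n z 2 (descWord (n - 1) 1) *
      gProd n z (n + 1) (ascWord 2 (n - 1)) * gMat n 0 (z (2 * n - 1)) := by
  rw [wordQ1, gProd_cons, gProd_append, gProd_append, gProd_cons, gProd_nil, mul_one]
  simp only [List.length_append, length_descWord, length_ascWord, mul_assoc]
  rw [show 1 + 1 + (n - 1 + 1 - 1) = n + 1 by omega,
    show 1 + 1 + (n - 1 + 1 - 1 + (n - 1 + 1 - 2)) = 2 * n - 1 by omega]

theorem natSingle_zero_vecMul_gProd_wordQ1 (hn : 2 ≤ n) :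
    natSingle 0 ᵥ* gProd n z 1 (wordQ1 n) =
      (natSingle (n + 1) - ∑ j ∈ range n, z (n + j) • natSingle j : Fin (2 * n + 2) → R) := by
  have hdesc : (natSingle 0 : Fin (2 * n + 2) → R) ᵥ* gProd n z 2 (descWord (n - 1) 1) =
      natSingle 1 - ∑ j ∈ range 1, z (n + j) • natSingle j := by
    rw [natSingle_vecMul_gProd_descWord_of_lt (by omega) (by omega),
      show 2 + (n - 1) - 1 - 0 = n by omega]
    simp
  rw [gProd_wordQ1 hn, ← vecMul_vecMul, ← vecMul_vecMul, ← vecMul_vecMul,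
    natSingle_vecMul_gMat_zero_of_ne (by omega) (by omega) (by omega) (by omega), hdesc,
    vecMul_gProd_ascWord_of_sub_sum (by omega) (by omega),
    show 2 * n - 1 = n + (n - 1) by omega, vecMul_gMat_zero_of_sub_sum hn]

theorem natSingle_vecMul_gProd_wordQ1 (hn : 2 ≤ n) {i : ℕ} (hi : 1 ≤ i) (hin : i < n) :
    natSingle i ᵥ* gProd n z 1 (wordQ1 n) =
      (natSingle i - z (n - i) • natSingle 0 : Fin (2 * n + 2) → R) := by
  rw [gProd_wordQ1 hn, ← vecMul_vecMul, ← vecMul_vecMul, ← vecMul_vecMul]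
  rcases (by omega : i + 1 < n ∨ i = n - 1) with hi' | rfl
  · rw [natSingle_vecMul_gMat_zero_of_ne (by omega) (by omega) (by omega) (by omega),
      natSingle_vecMul_gProd_descWord_of_lt (by omega) (by omega), sub_vecMul, smul_vecMul,
      natSingle_succ_vecMul_gProd_ascWord (by omega) (by omega) (by omega) (by omega),
      natSingle_vecMul_gProd_eq_self (fun x hx => by rw [mem_ascWord] at hx; omega),
      sub_vecMul, smul_vecMul,
      natSingle_vecMul_gMat_zero_of_ne (by omega) (by omega) (by omega) (by omega),
      natSingle_vecMul_gMat_zero_of_ne (by omega) (by omega) (by omega) (by omega),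
      show 2 + (n - 1) - 1 - i = n - i by omega]
  · rw [natSingle_sub_one_vecMul_gMat_zero (by omega), add_vecMul, smul_vecMul,
      natSingle_vecMul_gProd_descWord_self (by omega),
      natSingle_vecMul_gProd_eq_self (fun x hx => by rw [mem_descWord] at hx; omega),
      add_vecMul, smul_vecMul,
      natSingle_vecMul_gProd_eq_self (fun x hx => by rw [mem_ascWord] at hx; omega),
      natSingle_vecMul_gProd_eq_self (fun x hx => by rw [mem_ascWord] at hx; omega),
      add_vecMul, smul_vecMul,
      natSingle_vecMul_gMat_zero_of_ne (by omega) (by omega) (by omega) (by omega),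
      natSingle_add_one_vecMul_gMat_zero (by omega), show n - (n - 1) = 1 by omega]
    module

theorem gProd_wordQ1_apply (hn : 2 ≤ n) {i j : Fin (2 * n + 2)} (hi : (i : ℕ) < n)
    (hj : (j : ℕ) < n) :
    gProd n z 1 (wordQ1 n) i j =
      if (i : ℕ) = 0 then -z (n + j) else if (j : ℕ) = 0 then -z (n - i)
      else if (j : ℕ) = i then 1 else 0 := by
  rw [show gProd n z 1 (wordQ1 n) i = natSingle i ᵥ* gProd n z 1 (wordQ1 n) from
    (natSingle_vecMul i.isLt _).symm]
  rcases Nat.eq_zero_or_pos i with h0 | hpos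
  · rw [h0, natSingle_zero_vecMul_gProd_wordQ1 hn]
    simp only [Pi.sub_apply, Finset.sum_apply, Pi.smul_apply, natSingle, smul_eq_mul, mul_ite,
      mul_one, mul_zero, sum_ite_eq, mem_range, hj, if_neg (by omega : (j : ℕ) ≠ n + 1),
      ↓reduceIte, zero_sub]
  · rw [natSingle_vecMul_gProd_wordQ1 hn hpos hi]
    simp only [Pi.sub_apply, Pi.smul_apply, natSingle, smul_eq_mul, mul_ite, mul_one, mul_zero,
      if_neg hpos.ne']
    split_ifs <;> first | omega | ring

theorem det_submatrix_gProd_wordQ1 (hn : 2 ≤ n) {m : ℕ} (hm : m < n) (h : m + 1 ≤ 2 * n + 2) :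
    ((gProd n z 1 (wordQ1 n)).submatrix (Fin.castLE h) (Fin.castLE h)).det =
      -(z n + ∑ k ∈ Icc 1 m, z (n - k) * z (n + k)) := by
  set M := (gProd n z 1 (wordQ1 n)).submatrix (Fin.castLE h) (Fin.castLE h)
  have hM (i j : Fin (m + 1)) : M i j = if (i : ℕ) = 0 then -z (n + j)
      else if (j : ℕ) = 0 then -z (n - i) else if (j : ℕ) = i then 1 else 0 := by
    simp only [M, submatrix_apply]
    rw [gProd_wordQ1_apply hn (by rw [Fin.val_castLE]; omega) (by rw [Fin.val_castLE]; omega)]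
    simp only [Fin.val_castLE]
  have hone : M.submatrix Fin.succ Fin.succ = 1 := by
    ext i j
    simp [hM, one_apply, Fin.val_inj, eq_comm]
  have hsum : ∑ k ∈ Icc 1 m, z (n - k) * z (n + k) =
      ∑ i : Fin m, z (n + (i + 1)) * z (n - (i + 1)) := by
    rw [← Ico_add_one_right_eq_Icc, sum_Ico_eq_sum_range, ← Fin.sum_univ_eq_sum_range]
    exact sum_congr rfl fun i _ => by rw [add_comm 1, mul_comm]
  rw [det_eq_sub_sum_of_submatrix_succ_succ_eq_one hone, hsum]
  simp only [hM, Fin.val_zero, Fin.val_succ, ↓reduceIte, add_zero, Nat.add_one_ne_zero,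
    neg_mul_neg]
  ring

end WordQ1

/-- computational core of Proposition 2: for `M = M_{Q_1}` and
`1 ≤ α ≤ n`, the determinant of the northwest `α × α` submatrix of `M` equals
`-(z_n + Σ_{k=1}^{α-1} z_{n-k} z_{n+k})`. -/
theorem nwDet_MQ_wordQ1 (n : ℕ) (hn : 2 ≤ n) (α : ℕ) (hα1 : 1 ≤ α) (hαn : α ≤ n) :
    nwDet (MQ n (wordQ1 n)) α (by omega) =
      -(X n + ∑ k ∈ Finset.Icc 1 (α - 1), X (n - k) * X (n + k)) := by
  obtain ⟨m, rfl⟩ : ∃ m, α = m + 1 := ⟨α - 1, by omega⟩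
  rw [nwDet, MQ_eq_gProd, det_submatrix_gProd_wordQ1 hn (by omega), Nat.add_sub_cancel]
end

section
/- Let M be any of the matrices M_{Q_1}, M_{Q_2}, or M_{Q^{(i)}} (1 ≤ i ≤ n-1) over ℤ[z_1,…,z_{2n-1}]. Then for every 1 ≤ α ≤ n there exists ε ∈ {1,-1} such that the determinant of the northwest (2n+2-α)×(2n+2-α) submatrix of M equals ε times the determinant of the northwest α×α submatrix of M. (The 'minors agree up to sign' observation used in the proofs of Propositions 2, 3, and 4.) -/
open Matrix MvPolynomial

/-! Every generator `g_β(z)` preserves the split symmetric form whose Gram matrix is the exchange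
matrix `J` (ones on the antidiagonal): it is the permutation matrix of two disjoint transpositions
commuting with the reversal `i ↦ N - 1 - i`, plus a diagonal correction. Hence `M = M_Q` satisfies
`M J Mᵀ = J`, so `M⁻¹ = J Mᵀ J` and `(det M)² = 1`. By Jacobi's complementary minor identity the
leading `(N - α)`-minor of `M` is `det M` times the trailing `α`-minor of `M⁻¹`, and the trailing
`α × α` block of `J Mᵀ J` is the leading `α × α` block of `M`, transposed and read backwards. -/

namespace Matrix

variable {N : ℕ} {R : Type*} [CommRing R]

variable (N R) in
def exchangeMatrix : Matrix (Fin N) (Fin N) R :=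
  (Fin.revPerm : Equiv.Perm (Fin N)).permMatrix R

lemma mul_exchangeMatrix (A : Matrix (Fin N) (Fin N) R) :
    A * exchangeMatrix N R = A.submatrix id Fin.rev := by
  rw [exchangeMatrix, PEquiv.mul_toMatrix_toPEquiv]; rfl

lemma exchangeMatrix_mul (A : Matrix (Fin N) (Fin N) R) :
    exchangeMatrix N R * A = A.submatrix Fin.rev id :=
  PEquiv.toMatrix_toPEquiv_mul _ A

lemma exchangeMatrix_mul_self : exchangeMatrix N R * exchangeMatrix N R = 1 := by
  rw [exchangeMatrix_mul]
  ext i j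
  simp [exchangeMatrix, one_apply]

variable (N R) in
def splitOrthogonal : Submonoid (Matrix (Fin N) (Fin N) R) where
  carrier := {g | g * exchangeMatrix N R * gᵀ = exchangeMatrix N R}
  mul_mem' {g h} hg hh := by
    simp only [Set.mem_ofPred_eq, transpose_mul] at *
    calc g * h * exchangeMatrix N R * (hᵀ * gᵀ)
        = g * (h * exchangeMatrix N R * hᵀ) * gᵀ := by simp only [Matrix.mul_assoc]
      _ = _ := by rw [hh, hg]
  one_mem' := by simp

lemma mul_eq_one_of_mem_splitOrthogonal {M : Matrix (Fin N) (Fin N) R}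
    (hM : M ∈ splitOrthogonal N R) :
    M * (exchangeMatrix N R * Mᵀ * exchangeMatrix N R) = 1 := by
  calc M * (exchangeMatrix N R * Mᵀ * exchangeMatrix N R)
      = (M * exchangeMatrix N R * Mᵀ) * exchangeMatrix N R := by simp only [Matrix.mul_assoc]
    _ = 1 := by rw [show M * exchangeMatrix N R * Mᵀ = exchangeMatrix N R from hM,
                  exchangeMatrix_mul_self]

lemma det_mul_self_eq_one_of_mem_splitOrthogonal {M : Matrix (Fin N) (Fin N) R}
    (hM : M ∈ splitOrthogonal N R) : M.det * M.det = 1 := by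
  have hJ := congrArg det (exchangeMatrix_mul_self (N := N) (R := R))
  have hMJ := congrArg det (hM : M * exchangeMatrix N R * Mᵀ = exchangeMatrix N R)
  rw [det_mul, det_one] at hJ
  rw [det_mul, det_mul, det_transpose] at hMJ
  linear_combination (exchangeMatrix N R).det * hMJ + (1 - M.det * M.det) * hJ

lemma det_toBlocks₁₁_eq_det_mul_det_toBlocks₂₂ {k l : ℕ}
    {M M' : Matrix (Fin k ⊕ Fin l) (Fin k ⊕ Fin l) R} (h : M * M' = 1) :
    M.toBlocks₁₁.det = M.det * M'.toBlocks₂₂.det := by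
  have hblocks := h
  rw [← fromBlocks_toBlocks M, ← fromBlocks_toBlocks M', fromBlocks_multiply, ← fromBlocks_one,
    fromBlocks_inj] at hblocks
  obtain ⟨-, h₁₂, -, h₂₂⟩ := hblocks
  have key : M * fromBlocks 1 M'.toBlocks₁₂ 0 M'.toBlocks₂₂ =
      fromBlocks M.toBlocks₁₁ 0 M.toBlocks₂₁ 1 := by
    conv_lhs => rw [← fromBlocks_toBlocks M]
    rw [fromBlocks_multiply, h₁₂, h₂₂]
    simp
  simpa [det_fromBlocks_zero₂₁, det_fromBlocks_zero₁₂] using (congrArg det key).symm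

lemma det_submatrix_castLE_eq_det_mul_det_submatrix_castLE {M : Matrix (Fin N) (Fin N) R}
    (hM : M ∈ splitOrthogonal N R) {k a : ℕ} (hk : k ≤ N) (ha : a ≤ N) (hka : k + a = N) :
    (M.submatrix (Fin.castLE hk) (Fin.castLE hk)).det =
      M.det * (M.submatrix (Fin.castLE ha) (Fin.castLE ha)).det := by
  let e : Fin k ⊕ Fin a ≃ Fin N := finSumFinEquiv.trans (finCongr hka)
  let M' := exchangeMatrix N R * Mᵀ * exchangeMatrix N R
  have hprod : M.submatrix e e * M'.submatrix e e = 1 := by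
    rw [submatrix_mul_equiv, mul_eq_one_of_mem_splitOrthogonal hM, submatrix_one_equiv]
  have hNW : (M.submatrix e e).toBlocks₁₁ = M.submatrix (Fin.castLE hk) (Fin.castLE hk) := rfl
  have hSE : (M'.submatrix e e).toBlocks₂₂ =
      (M.submatrix (Fin.castLE ha) (Fin.castLE ha))ᵀ.submatrix Fin.revPerm Fin.revPerm := by
    ext i j
    simp only [M', mul_exchangeMatrix, exchangeMatrix_mul, toBlocks₂₂, of_apply, submatrix_apply,
      transpose_apply, id, Fin.revPerm_apply]
    congr 1 <;> ext <;>
      simp only [e, Equiv.trans_apply, finSumFinEquiv_apply_right, finCongr_apply, Fin.val_rev,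
        Fin.val_cast, Fin.val_natAdd, Fin.val_castLE] <;> omega
  rw [← hNW, det_toBlocks₁₁_eq_det_mul_det_toBlocks₂₂ hprod, det_submatrix_equiv_self, hSE,
    det_submatrix_equiv_self, det_transpose]

lemma permMatrix_add_diagonal_mem_splitOrthogonal (σ : Equiv.Perm (Fin N)) (d : Fin N → R)
    (hσ : Function.Involutive σ) (hrev : ∀ i, σ i.rev = (σ i).rev)
    (hd : ∀ i, d (σ i).rev = -d i) (hdd : ∀ i, d i * d i.rev = 0) :
    σ.permMatrix R + diagonal d ∈ splitOrthogonal N R := by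
  change _ * _ * _ = _
  ext i j
  simp only [transpose_add, transpose_permMatrix, diagonal_transpose, add_mul, mul_add,
    Equiv.Perm.permMatrix, PEquiv.toMatrix_toPEquiv_mul, PEquiv.mul_toMatrix_toPEquiv,
    mul_diagonal, mul_exchangeMatrix, add_apply, submatrix_apply, id]
  have e₁ : (σ i).rev = σ j ↔ i.rev = j := by
    rw [← hrev, hσ.injective.eq_iff, eq_comm]
  have e₂ : i = (σ j).rev ↔ (σ i).rev = j := by
    rw [← hrev, Fin.rev_eq_iff, hσ.eq_iff, eq_comm]
  simp only [exchangeMatrix, PEquiv.toMatrix_apply, Equiv.toPEquiv_apply, Option.mem_def,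
    Option.some.injEq, Fin.revPerm_apply, Equiv.symm_symm, Equiv.Perm.inv_def, diagonal_apply,
    e₁, e₂]
  have h₁ : (σ i).rev = j → d i + d j = 0 := by rintro rfl; rw [hd]; ring
  have h₂ : i.rev = j → d i * d j = 0 := by rintro rfl; exact hdd i
  -- the entry is now `[j = rev i] + [j = rev (σ i)] (d i + d j) + [j = rev i] d i d j`
  simp only [← Fin.rev_eq_iff]
  split_ifs with hA hB hB
  · linear_combination h₁ hB + h₂ hA
  · linear_combination h₂ hA
  · linear_combination h₁ hB
  · ring

def twistMatrix (p q : Fin N) (z : R) : Matrix (Fin N) (Fin N) R :=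
  of fun i j =>
    if i = p ∧ j = p then -z
    else if i = q.rev ∧ j = q.rev then z
    else if (i = p ∧ j = q) ∨ (i = q ∧ j = p) ∨ (i = q.rev ∧ j = p.rev) ∨
        (i = p.rev ∧ j = q.rev) then 1
    else if i = j ∧ ¬(i = p ∨ i = q ∨ i = q.rev ∨ i = p.rev) then 1
    else 0

lemma twistMatrix_eq_permMatrix_add_diagonal {p q : Fin N} (h : [p, q, q.rev, p.rev].Nodup)
    (z : R) : twistMatrix p q z = (Equiv.swap p q * Equiv.swap q.rev p.rev).permMatrix R +
      diagonal (Pi.single p (-z) + Pi.single q.rev z) := by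
  simp only [List.nodup_cons, List.mem_cons, List.not_mem_nil, or_false, not_or] at h
  obtain ⟨⟨hpq, hpq', hp⟩, ⟨hqq', hqp'⟩, hq'p', -⟩ := h
  ext i j
  simp only [twistMatrix, of_apply, Matrix.add_apply, diagonal_apply, Equiv.Perm.permMatrix,
    PEquiv.toMatrix_apply, Equiv.toPEquiv_apply, Option.mem_def, Option.some.injEq,
    Equiv.Perm.mul_apply, Pi.add_apply, Pi.single_apply]
  have := Ne.symm hpq; have := Ne.symm hpq'; have := Ne.symm hp; have := Ne.symm hqq'
  have := Ne.symm hqp'; have := Ne.symm hq'p'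
  by_cases hi : i = p ∨ i = q ∨ i = q.rev ∨ i = p.rev
  · rcases hi with rfl | rfl | rfl | rfl <;>
      simp [Equiv.swap_apply_of_ne_of_ne, eq_comm (b := j), *] <;> split_ifs <;> simp_all
  · simp only [not_or] at hi
    simp [Equiv.swap_apply_of_ne_of_ne, *]

lemma twistMatrix_mem_splitOrthogonal {p q : Fin N} (h : [p, q, q.rev, p.rev].Nodup) (z : R) :
    twistMatrix p q z ∈ splitOrthogonal N R := by
  have hc : Commute (Equiv.swap p q) (Equiv.swap q.rev p.rev) :=
    (Equiv.Perm.disjoint_swap_swap h).commute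
  rw [twistMatrix_eq_permMatrix_add_diagonal h]
  simp only [List.nodup_cons, List.mem_cons, List.not_mem_nil, or_false, not_or] at h
  obtain ⟨⟨hpq, hpq', hp⟩, ⟨hqq', hqp'⟩, hq'p', -⟩ := h
  apply permMatrix_add_diagonal_mem_splitOrthogonal
  · intro i
    rw [← Equiv.Perm.mul_apply, hc.symm.mul_mul_mul_comm, Equiv.swap_mul_self,
      Equiv.swap_mul_self, mul_one, Equiv.Perm.one_apply]
  · intro i
    rw [Equiv.Perm.mul_apply, Equiv.Perm.mul_apply, Fin.rev_injective.map_swap,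
      Fin.rev_injective.map_swap, Fin.rev_rev, Fin.rev_rev, Equiv.swap_comm p.rev,
      Equiv.swap_comm q, ← Equiv.Perm.mul_apply, ← Equiv.Perm.mul_apply, hc.eq]
  · intro i
    simp only [Equiv.Perm.mul_apply, Equiv.swap_apply_def, Pi.add_apply, Pi.single_apply]
    split_ifs <;> simp_all [Fin.rev_eq_iff]
  · intro i
    simp only [Pi.add_apply, Pi.single_apply, Fin.rev_eq_iff, Fin.rev_rev]
    split_ifs <;> simp_all

end Matrix

open Matrix

lemma gMat_zero_eq_twistMatrix {R : Type*} [CommRing R] {n : ℕ} (hn : 1 ≤ n) (z : R) :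
    gMat n 0 z = twistMatrix ⟨n - 1, by omega⟩ ⟨n + 1, by omega⟩ z := by
  ext i j
  simp only [gMat, twistMatrix, of_apply, if_true]
  refine if_congr ?_ rfl (if_congr ?_ rfl (if_congr ?_ rfl (if_congr ?_ rfl rfl))) <;>
    simp only [Fin.ext_iff, Fin.val_rev] <;> omega

lemma gMat_eq_twistMatrix {R : Type*} [CommRing R] {n β : ℕ} (hβ : 1 ≤ β) (hβn : β ≤ n) (z : R) :
    gMat n β z = twistMatrix ⟨β - 1, by omega⟩ ⟨β, by omega⟩ z := by
  ext i j
  simp only [gMat, twistMatrix, of_apply, Nat.pos_iff_ne_zero.mp hβ, if_false]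
  refine if_congr ?_ rfl (if_congr ?_ rfl (if_congr ?_ rfl (if_congr ?_ rfl rfl))) <;>
    simp only [Fin.ext_iff, Fin.val_rev] <;> omega

lemma gMat_mem_splitOrthogonal {R : Type*} [CommRing R] {n β : ℕ} (hn : 1 ≤ n) (hβn : β ≤ n)
    (z : R) : gMat n β z ∈ splitOrthogonal (2 * n + 2) R := by
  rcases Nat.eq_zero_or_pos β with rfl | hβ
  · rw [gMat_zero_eq_twistMatrix hn]
    exact twistMatrix_mem_splitOrthogonal (by simp [Fin.ext_iff]; omega) z
  · rw [gMat_eq_twistMatrix hβ hβn]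
    exact twistMatrix_mem_splitOrthogonal (by simp [Fin.ext_iff]; omega) z

lemma MQ_mem_splitOrthogonal {n : ℕ} (hn : 1 ≤ n) {Q : List ℕ} (hQ : ∀ β ∈ Q, β ≤ n) :
    MQ n Q ∈ splitOrthogonal (2 * n + 2) (MvPolynomial ℕ ℤ) := by
  refine Submonoid.list_prod_mem _ fun g hg => ?_
  obtain ⟨l, rfl⟩ := List.mem_ofFn.mp hg
  exact gMat_mem_splitOrthogonal hn (hQ _ (List.get_mem Q l)) _

lemma le_of_mem_word {n : ℕ} {Q : List ℕ}
    (hQ : Q = wordQ1 n ∨ Q = wordQ2 n ∨ ∃ i, 1 ≤ i ∧ i ≤ n - 1 ∧ Q = wordQi n i) :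
    ∀ β ∈ Q, β ≤ n := by
  intro β hβ
  rcases hQ with rfl | rfl | ⟨i, -, hi, rfl⟩ <;>
    simp only [wordQ1, wordQ2, wordQi, descWord, ascWord, List.mem_cons, List.mem_append,
      List.mem_reverse, List.mem_map, List.mem_range, List.not_mem_nil, or_false] at hβ <;> omega

/-- for `M` any of `M_{Q_1}`, `M_{Q_2}`, `M_{Q^{(i)}}` (`1 ≤ i ≤ n-1`) and
`1 ≤ α ≤ n`, the determinant of the northwest `(2n+2-α) × (2n+2-α)` submatrix of `M`
equals the determinant of the northwest `α × α` submatrix of `M` up to a sign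
`ε ∈ {1,-1}`. -/
theorem nwDet_compl_eq_sign_mul_nwDet (n : ℕ) (Q : List ℕ)
    (hQ : Q = wordQ1 n ∨ Q = wordQ2 n ∨ ∃ i, 1 ≤ i ∧ i ≤ n - 1 ∧ Q = wordQi n i)
    (α : ℕ) (hα1 : 1 ≤ α) (hαn : α ≤ n) :
    ∃ ε : MvPolynomial ℕ ℤ, (ε = 1 ∨ ε = -1) ∧
      nwDet (MQ n Q) (2 * n + 2 - α) (by omega) = ε * nwDet (MQ n Q) α (by omega) := by
  have hM := MQ_mem_splitOrthogonal (by omega) (le_of_mem_word hQ)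
  exact ⟨_, mul_self_eq_one_iff.mp (det_mul_self_eq_one_of_mem_splitOrthogonal hM),
    det_submatrix_castLE_eq_det_mul_det_submatrix_castLE hM _ _ (by omega)⟩
end

section
/- Let M = M_{Q_2} over ℤ[z_1,…,z_{2n-1}] for the word Q_2 = (n, n-1, …, 2, 1, 2, …, n-1, n). Then the determinant of the submatrix of M with rows {1,2,…,n} and columns {2,3,…,n+1} is equal to 1 or -1 (a unit in ℤ[z_1,…,z_{2n-1}]). (The α = 0 case in the proof of Proposition 3: there is exactly one matching of {1,…,n} with {2',…,(n+1)'} and all its edges have weight 1.) -/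
open Matrix MvPolynomial

/-! For `1 ≤ α ≤ n` the factor `g_α(z)` acts on the row vectors `e_0, …, e_n` spanning the upper
block (0-based indices) by `e_{α-1} ↦ -z e_{α-1} + e_α` and `e_α ↦ e_{α-1}`, fixing the others.
Following `e_r` through the descending half and then the ascending half of `Q_2` shows that row
`r ≥ 1` of `M_{Q_2}` is `c e_0 + e_r`; following the column `e_n` backwards through the ascending
half gives `M_{0,n} = 1`. Column `0` is not in the minor, so its rows `1, …, n-1` are the unit
vectors `e_0, …, e_{n-2}` and its row `0` ends in `1`: expanding along the last column, the minor
is `(-1)^(n-1)`.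
-/

section

variable {R : Type*} [CommRing R]

-- Indexed by `ℕ` so that index arithmetic stays within `omega`; zero when `N ≤ i`.
def unitVec {N : ℕ} (i : ℕ) : Fin N → R := fun j => if (j : ℕ) = i then 1 else 0

lemma dotProduct_unitVec {N j : ℕ} (hj : j < N) (v : Fin N → R) : v ⬝ᵥ unitVec j = v ⟨j, hj⟩ := by
  simp only [dotProduct, unitVec, mul_ite, mul_one, mul_zero]
  rw [Finset.sum_eq_single ⟨j, hj⟩] <;> simp_all [Fin.ext_iff]

lemma unitVec_vecMul {N i : ℕ} (hi : i < N) (M : Matrix (Fin N) (Fin N) R) :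
    unitVec i ᵥ* M = M ⟨i, hi⟩ :=
  funext fun _ => (dotProduct_comm _ _).trans (dotProduct_unitVec hi _)

lemma mulVec_unitVec {N j : ℕ} (hj : j < N) (M : Matrix (Fin N) (Fin N) R) :
    M *ᵥ unitVec j = fun i => M i ⟨j, hj⟩ :=
  funext fun i => dotProduct_unitVec hj (M i)

lemma det_eq_neg_one_pow_of_row_succ_eq_unitVec {m : ℕ}
    (B : Matrix (Fin (m + 1)) (Fin (m + 1)) R) (hlast : B 0 (Fin.last m) = 1)
    (hsucc : ∀ r : Fin m, B r.succ = unitVec r) : B.det = (-1) ^ m := by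
  have hminor : B.submatrix Fin.succ Fin.castSucc = 1 := by
    ext r c
    simp [hsucc, unitVec, Matrix.one_apply, ← Fin.val_eq_val, eq_comm]
  rw [det_succ_column B (Fin.last m), Fin.sum_univ_succ, Finset.sum_eq_zero]
  · simp [hlast, hminor]
  · intro r _
    simp [hsucc, unitVec, r.isLt.ne']

section

variable {n α : ℕ}

lemma unitVec_vecMul_gMat_of_ne (hα1 : 1 ≤ α) (hα : α ≤ n) (z : R) {i : ℕ} (hi : i ≤ n)
    (hpred : i + 1 ≠ α) (hself : i ≠ α) : unitVec i ᵥ* gMat n α z = unitVec i := by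
  rw [unitVec_vecMul (by omega)]
  funext j
  unfold gMat unitVec
  rw [of_apply]
  dsimp only
  split_ifs <;> first | rfl | omega

lemma unitVec_vecMul_gMat_self (hα1 : 1 ≤ α) (hα : α ≤ n) (z : R) :
    unitVec α ᵥ* gMat n α z = unitVec (α - 1) := by
  rw [unitVec_vecMul (by omega)]
  funext j
  unfold gMat unitVec
  rw [of_apply]
  dsimp only
  split_ifs <;> first | rfl | omega

lemma unitVec_pred_vecMul_gMat (hα1 : 1 ≤ α) (hα : α ≤ n) (z : R) :
    unitVec (α - 1) ᵥ* gMat n α z = -z • unitVec (α - 1) + unitVec α := by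
  rw [unitVec_vecMul (by omega)]
  funext j
  unfold gMat unitVec
  rw [of_apply, Pi.add_apply, Pi.smul_apply, smul_eq_mul]
  dsimp only
  split_ifs <;> first | ring1 | omega

lemma gMat_mulVec_unitVec_self (hα1 : 1 ≤ α) (hα : α ≤ n) (z : R) :
    gMat n α z *ᵥ unitVec α = unitVec (α - 1) := by
  rw [mulVec_unitVec (by omega)]
  funext i
  unfold gMat unitVec
  rw [of_apply]
  dsimp only
  split_ifs <;> first | rfl | omega

end

variable (n : ℕ) (z : ℕ → R)

def descProd (k : ℕ) : Matrix (Fin (2 * n + 2)) (Fin (2 * n + 2)) R :=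
  ((List.range k).map fun i => gMat n (n - i) (z i)).prod

def ascProd (k : ℕ) : Matrix (Fin (2 * n + 2)) (Fin (2 * n + 2)) R :=
  ((List.range k).map fun i => gMat n (i + 2) (z i)).prod

variable {n}

lemma descProd_succ (k : ℕ) : descProd n z (k + 1) = descProd n z k * gMat n (n - k) (z k) := by
  simp [descProd, List.range_succ]

lemma ascProd_succ (k : ℕ) : ascProd n z (k + 1) = ascProd n z k * gMat n (k + 2) (z k) := by
  simp [ascProd, List.range_succ]

lemma unitVec_vecMul_descProd {r : ℕ} (hr : r < n) {k : ℕ} (hk : k ≤ n) :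
    unitVec r ᵥ* descProd n z k =
      if k + r < n then unitVec r else -z (n - 1 - r) • unitVec (n - k) + unitVec (r + 1) := by
  induction k with
  | zero => simp [descProd, hr]
  | succ k ih =>
    rw [descProd_succ, ← vecMul_vecMul, ih (by omega), show n - (k + 1) = n - k - 1 by omega]
    rcases lt_trichotomy (k + 1 + r) n with h | h | h
    · rw [if_pos (by omega), if_pos h]
      exact unitVec_vecMul_gMat_of_ne (by omega) (by omega) _ (by omega) (by omega) (by omega)
    · rw [if_pos (by omega), if_neg (by omega), show n - 1 - r = k by omega,
        show r + 1 = n - k by omega, show r = n - k - 1 by omega]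
      exact unitVec_pred_vecMul_gMat (by omega) (by omega) _
    · rw [if_neg (by omega), if_neg (by omega), add_vecMul, smul_vecMul,
        unitVec_vecMul_gMat_self (by omega) (by omega),
        unitVec_vecMul_gMat_of_ne (by omega) (by omega) _ (by omega) (by omega) (by omega)]

lemma unitVec_zero_vecMul_ascProd {k : ℕ} (hk : k + 1 ≤ n) :
    unitVec 0 ᵥ* ascProd n z k = unitVec 0 := by
  induction k with
  | zero => simp [ascProd]
  | succ k ih =>
    rw [ascProd_succ, ← vecMul_vecMul, ih (by omega),
      unitVec_vecMul_gMat_of_ne (by omega) (by omega) _ (by omega) (by omega) (by omega)]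

lemma unitVec_vecMul_ascProd {j : ℕ} (hj2 : 2 ≤ j) (hj : j ≤ n) {k : ℕ} (hk : k + 1 ≤ n) :
    unitVec j ᵥ* ascProd n z k = if k + 2 ≤ j then unitVec j else unitVec (j - 1) := by
  induction k with
  | zero => simp [ascProd, hj2]
  | succ k ih =>
    rw [ascProd_succ, ← vecMul_vecMul, ih (by omega)]
    rcases lt_trichotomy (k + 2) j with h | h | h
    · rw [if_pos (by omega), if_pos (by omega)]
      exact unitVec_vecMul_gMat_of_ne (by omega) (by omega) _ (by omega) (by omega) (by omega)
    · rw [if_pos (by omega), if_neg (by omega), ← h]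
      exact unitVec_vecMul_gMat_self (by omega) (by omega) _
    · rw [if_neg (by omega), if_neg (by omega)]
      exact unitVec_vecMul_gMat_of_ne (by omega) (by omega) _ (by omega) (by omega) (by omega)

lemma ascProd_mulVec_unitVec {k : ℕ} (hk : k + 1 ≤ n) :
    ascProd n z k *ᵥ unitVec (k + 1) = unitVec 1 := by
  induction k with
  | zero => simp [ascProd]
  | succ k ih =>
    rw [ascProd_succ, ← mulVec_mulVec, gMat_mulVec_unitVec_self (by omega) (by omega)]
    exact ih (by omega)

end

lemma MQ_wordQ2_eq (n : ℕ) :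
    MQ n (wordQ2 n) =
      descProd n (fun i => X (i + 1)) n * ascProd n (fun i => X (n + i + 1)) (n - 1) := by
  rw [descProd, ascProd, ← List.prod_append, MQ]
  congr 1
  apply List.ext_getElem
  · simp [wordQ2, descWord, ascWord]
  · intro i h1 h2
    simp only [wordQ2, descWord, ascWord, List.getElem_ofFn, List.get_eq_getElem,
      List.getElem_append, List.getElem_map, List.getElem_range, List.getElem_reverse,
      List.length_map, List.length_range, List.length_reverse]
    split_ifs <;> first | (exfalso; omega) | (congr 2; omega)

lemma MQ_wordQ2_row {n r : ℕ} (hr1 : 1 ≤ r) (hr : r < n) :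
    ∃ c : MvPolynomial ℕ ℤ, MQ n (wordQ2 n) ⟨r, by omega⟩ = c • unitVec 0 + unitVec r := by
  rw [← unitVec_vecMul (M := MQ _ (wordQ2 _)) (by omega), MQ_wordQ2_eq, ← vecMul_vecMul,
    unitVec_vecMul_descProd _ hr le_rfl, if_neg (by omega), Nat.sub_self, add_vecMul, smul_vecMul,
    unitVec_zero_vecMul_ascProd _ (by omega), unitVec_vecMul_ascProd _ (by omega) hr (by omega),
    if_neg (by omega)]
  exact ⟨_, rfl⟩

lemma MQ_wordQ2_apply_zero {n : ℕ} (hn : 1 ≤ n) :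
    MQ n (wordQ2 n) ⟨0, by omega⟩ ⟨n, by omega⟩ = 1 := by
  obtain ⟨m, rfl⟩ : ∃ m, n = m + 1 := ⟨n - 1, by omega⟩
  have hcol := ascProd_mulVec_unitVec (n := m + 1) (k := m)
    (fun i => (X (m + 1 + i + 1) : MvPolynomial ℕ ℤ)) le_rfl
  rw [mulVec_unitVec (by omega)] at hcol
  rw [← unitVec_vecMul (M := MQ _ (wordQ2 _)) (by omega), MQ_wordQ2_eq, ← vecMul_vecMul,
    unitVec_vecMul_descProd _ (by omega) le_rfl, if_neg (by omega), Nat.add_sub_cancel]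
  change _ ⬝ᵥ (fun i => _) = _
  rw [hcol, dotProduct_unitVec (by omega)]
  simp [unitVec]

/-- the `α = 0` case in the proof of Proposition 3: the determinant of
the submatrix of `M_{Q_2}` with rows `{1,…,n}` and columns `{2,…,n+1}` is `1` or `-1`. -/
theorem MQ_wordQ2_minor_isUnit (n : ℕ) :
    let d : MvPolynomial ℕ ℤ :=
      ((MQ n (wordQ2 n)).submatrix
        (fun a : Fin n => (Fin.castLE (by omega) a : Fin (2 * n + 2)))
        (fun b : Fin n => (⟨(b : ℕ) + 1, by omega⟩ : Fin (2 * n + 2)))).det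
    d = 1 ∨ d = -1 := by
  intro d
  cases n with
  | zero => exact Or.inl det_isEmpty
  | succ m =>
    have hd : d = (-1) ^ m := by
      apply det_eq_neg_one_pow_of_row_succ_eq_unitVec
      · exact MQ_wordQ2_apply_zero (by omega)
      · intro r
        obtain ⟨c, hc⟩ := MQ_wordQ2_row (n := m + 1) (r := r + 1) (by omega) (by omega)
        funext b
        show MQ (m + 1) (wordQ2 (m + 1)) ⟨r + 1, by omega⟩ ⟨b + 1, by omega⟩ = unitVec r b
        simp [hc, unitVec]
    rw [hd]
    exact neg_one_pow_eq_or _ m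
end

section
/- Let n ≥ 2, let J be the 2n×2n antidiagonal matrix of 1's, let J' be the 2n×2n matrix equal to the identity except that its (1,1) and (2n,2n) entries are 0 and its (1,2n) and (2n,1) entries are 1, and let h = e_1 - e_{2n} ∈ ℂ^{2n} (the vector (1,0,…,0,-1)ᵀ). If g ∈ Mat_{2n}(ℂ) satisfies gᵀ J g = J and g J' = J' g, then g h = h or g h = -h. (The key step in the proof of Proposition 1 showing that the θ-fixed subgroup stabilizes the line through the non-isotropic vector h.) -/
open Matrix

/-- if `g` preserves the antidiagonal form `J` and commutes with `J'`
(the swap of the first and last coordinates), then `g` sends the vector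
`h = (1,0,…,0,-1)ᵀ` to `h` or `-h`. -/
theorem fixed_subgroup_stabilizes_h (n : ℕ) (hn : 2 ≤ n)
    (g : Matrix (Fin (2 * n)) (Fin (2 * n)) ℂ) :
    let J : Matrix (Fin (2 * n)) (Fin (2 * n)) ℂ :=
      Matrix.of fun i j => if (i : ℕ) + (j : ℕ) = 2 * n - 1 then 1 else 0
    let J' : Matrix (Fin (2 * n)) (Fin (2 * n)) ℂ := Matrix.of fun i j =>
      if ((i : ℕ) = 0 ∧ (j : ℕ) = 2 * n - 1) ∨ ((i : ℕ) = 2 * n - 1 ∧ (j : ℕ) = 0)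
        then 1
      else if i = j ∧ (i : ℕ) ≠ 0 ∧ (i : ℕ) ≠ 2 * n - 1 then 1
      else 0
    let h : Fin (2 * n) → ℂ := fun k =>
      if (k : ℕ) = 0 then 1 else if (k : ℕ) = 2 * n - 1 then -1 else 0
    gᵀ * J * g = J → g * J' = J' * g →
      (g.mulVec h = h ∨ g.mulVec h = -h) := by
  intro J J' h hg hcomm
  have hbn : 2 * n - 1 < 2 * n := by omega
  have han : 0 < 2 * n := by omega
  set a : Fin (2*n) := ⟨0, han⟩ with ha'
  set b : Fin (2*n) := ⟨2*n-1, hbn⟩ with hb'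
  have hav : (a : ℕ) = 0 := rfl
  have hbv : (b : ℕ) = 2*n-1 := rfl
  have hab : a ≠ b := by
    intro e; rw [Fin.ext_iff, hav, hbv] at e; omega
  -- h entries
  have hhe : ∀ i : Fin (2*n),
      h i = if (i : ℕ) = 0 then 1 else if (i : ℕ) = 2 * n - 1 then -1 else 0 := fun i => rfl
  have hha : h a = 1 := by rw [hhe, hav, if_pos rfl]
  have hhb : h b = -1 := by rw [hhe, hbv, if_neg (by omega), if_pos rfl]
  have hh0 : ∀ i : Fin (2*n), i ≠ a → i ≠ b → h i = 0 := by
    intro i hia hib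
    rw [Fin.ne_iff_vne, hav] at hia
    rw [Fin.ne_iff_vne, hbv] at hib
    rw [hhe, if_neg hia, if_neg hib]
  -- J' entries
  have hJ'e : ∀ i j : Fin (2*n), J' i j =
      if ((i : ℕ) = 0 ∧ (j : ℕ) = 2 * n - 1) ∨ ((i : ℕ) = 2 * n - 1 ∧ (j : ℕ) = 0)
        then 1
      else if i = j ∧ (i : ℕ) ≠ 0 ∧ (i : ℕ) ≠ 2 * n - 1 then 1
      else 0 := fun i j => rfl
  -- J entries
  have hJe : ∀ i j : Fin (2*n), J i j =
      if (i : ℕ) + (j : ℕ) = 2 * n - 1 then 1 else 0 := fun i j => rfl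
  -- dot product with h picks out the a and b coordinates
  have hsum : ∀ f : Fin (2*n) → ℂ, h ⬝ᵥ f = f a - f b := by
    intro f
    have e1 : (∑ i, h i * f i) = ∑ i ∈ ({a, b} : Finset (Fin (2*n))), h i * f i := by
      refine (Finset.sum_subset (Finset.subset_univ _) ?_).symm
      intro x _ hx
      simp only [Finset.mem_insert, Finset.mem_singleton, not_or] at hx
      rw [hh0 x hx.1 hx.2, zero_mul]
    rw [dotProduct, e1, Finset.sum_pair hab, hha, hhb]
    ring
  -- structure of J' *ᵥ w
  have hJ'v : ∀ w : Fin (2*n) → ℂ, ∀ i : Fin (2*n),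
      (J'.mulVec w) i = if i = a then w b else if i = b then w a else w i := by
    intro w i
    show (∑ j, J' i j * w j) = _
    by_cases hia : i = a
    · subst hia
      rw [if_pos rfl, Finset.sum_eq_single b]
      · rw [hJ'e, if_pos (Or.inl ⟨hav, hbv⟩), one_mul]
      · intro j _ hj
        rw [Fin.ne_iff_vne, hbv] at hj
        rw [hJ'e, if_neg, if_neg, zero_mul]
        · rintro ⟨-, h0, -⟩; rw [hav] at h0; exact h0 rfl
        · rintro (⟨-, hj2⟩ | ⟨h1, -⟩)
          · exact hj hj2
          · rw [hav] at h1; omega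
      · intro hmem; exact absurd (Finset.mem_univ b) hmem
    · by_cases hib : i = b
      · subst hib
        rw [if_neg hia, if_pos rfl, Finset.sum_eq_single a]
        · rw [hJ'e, if_pos (Or.inr ⟨hbv, hav⟩), one_mul]
        · intro j _ hj
          rw [Fin.ne_iff_vne, hav] at hj
          rw [hJ'e, if_neg, if_neg, zero_mul]
          · rintro ⟨-, -, h1⟩; rw [hbv] at h1; exact h1 rfl
          · rintro (⟨h1, -⟩ | ⟨-, hj0⟩)
            · rw [hbv] at h1; omega
            · exact hj hj0
        · intro hmem; exact absurd (Finset.mem_univ a) hmem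
      · replace hia : (i:ℕ) ≠ 0 := fun h0 => hia (Fin.ext (h0.trans hav.symm))
        replace hib : (i:ℕ) ≠ 2*n-1 := fun h0 => hib (Fin.ext (h0.trans hbv.symm))
        rw [if_neg (fun e => hia ((congrArg Fin.val e).trans hav)),
            if_neg (fun e => hib ((congrArg Fin.val e).trans hbv)),
            Finset.sum_eq_single i]
        · rw [hJ'e, if_neg, if_pos ⟨rfl, hia, hib⟩, one_mul]
          rintro (⟨h1, -⟩ | ⟨h1, -⟩)
          · exact hia h1
          · exact hib h1
        · intro j _ hj
          rw [hJ'e, if_neg, if_neg, zero_mul]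
          · rintro ⟨hij, -⟩; exact hj hij.symm
          · rintro (⟨h1, -⟩ | ⟨h1, -⟩)
            · exact hia h1
            · exact hib h1
        · intro hmem; exact absurd (Finset.mem_univ i) hmem
  -- J' *ᵥ h = -h
  have hJ'h : J'.mulVec h = -h := by
    funext i
    rw [hJ'v, Pi.neg_apply]
    by_cases hia : i = a
    · subst hia; rw [if_pos rfl, hhb, hha]
    · by_cases hib : i = b
      · subst hib; rw [if_neg hia, if_pos rfl, hha, hhb, neg_neg]
      · rw [if_neg hia, if_neg hib, hh0 i hia hib, neg_zero]
  set v : Fin (2*n) → ℂ := g.mulVec h with hv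
  -- J' *ᵥ v = -v
  have hcv : J'.mulVec v = -v := by
    have e := congrArg (fun M => M.mulVec h) hcomm
    simp only [← mulVec_mulVec] at e
    rw [hJ'h, mulVec_neg] at e
    rw [hv, ← e]
  set c : ℂ := v a with hc
  have hvb : v b = -c := by
    have e := congrFun hcv a
    rw [hJ'v, if_pos rfl, Pi.neg_apply] at e
    rw [e, hc]
  have hv0 : ∀ i, i ≠ a → i ≠ b → v i = 0 := by
    intro i hia hib
    have e := congrFun hcv i
    rw [hJ'v, if_neg hia, if_neg hib, Pi.neg_apply] at e
    linear_combination e / 2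
  have hvc : v = c • h := by
    funext i
    by_cases hia : i = a
    · subst hia; rw [Pi.smul_apply, hha, smul_eq_mul, mul_one, hc]
    · by_cases hib : i = b
      · subst hib; rw [Pi.smul_apply, hhb, hvb, smul_eq_mul]; ring
      · rw [hv0 i hia hib, Pi.smul_apply, hh0 i hia hib, smul_eq_mul, mul_zero]
  -- the quadratic form
  have hq : h ⬝ᵥ J.mulVec h = -2 := by
    have e : ∀ i : Fin (2*n), (J.mulVec h) i = J i a - J i b := by
      intro i
      show (∑ j, J i j * h j) = _
      have e2 : (∑ j, J i j * h j) = h ⬝ᵥ (fun j => J i j) := by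
        rw [dotProduct]; exact Finset.sum_congr rfl (fun j _ => mul_comm _ _)
      rw [e2, hsum]
    have hJab : J a b = 1 := by rw [hJe, hav, hbv, if_pos (by omega)]
    have hJba : J b a = 1 := by rw [hJe, hav, hbv, if_pos (by omega)]
    have hJaa : J a a = 0 := by rw [hJe, hav, if_neg (by omega)]
    have hJbb : J b b = 0 := by rw [hJe, hbv, if_neg (by omega)]
    rw [hsum, e, e, hJaa, hJab, hJba, hJbb]
    ring
  have hmain : v ⬝ᵥ J.mulVec v = h ⬝ᵥ J.mulVec h := by
    conv_rhs => rw [← hg, ← mulVec_mulVec, ← mulVec_mulVec, dotProduct_mulVec,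
      vecMul_transpose]
  have hc2 : c * c = 1 := by
    rw [hvc, mulVec_smul, smul_dotProduct, dotProduct_smul, hq] at hmain
    have e : c * (c * (-2)) = -2 := by simpa [smul_eq_mul] using hmain
    linear_combination (-1/2 : ℂ) * e
  have hfac : (c - 1) * (c + 1) = 0 := by linear_combination hc2
  rcases mul_eq_zero.mp hfac with h1 | h1
  · left
    rw [hvc, show c = 1 by linear_combination h1, one_smul]
  · right
    rw [hvc, show c = -1 by linear_combination h1]
    funext i; simp
end

section
/- Let n ≥ 2 and let φ : ℤ[z_1,…,z_{2n-1}] → ℤ[u_2, u_3, …, u_{2n}] be the ring homomorphism determined by φ(z_j) = u_{2j+1} for 1 ≤ j ≤ n-1, φ(z_n) = u_2 + Σ_{i=1}^{n-1} u_{2i+1} u_{2i+2}, and φ(z_j) = -u_{2(2n+1-j)} for n+1 ≤ j ≤ 2n-1. Then for every 1 ≤ α ≤ n, φ(z_n + Σ_{k=1}^{α-1} z_{n-k} z_{n+k}) = u_2 + Σ_{i=1}^{n-α} u_{2i+1} u_{2i+2}. (The pullback computation via the chart map c_1 in the proof of Proposition 5.) -/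
open MvPolynomial

/-!
Under `φ`, the product `z_{n-k} z_{n+k}` becomes `-u_{2(n-k)+1} u_{2(n-k)+2}`, which is minus
the `(n-k)`-th summand of `φ(z_n)`; so the terms `k = 1, …, α-1` cancel the top `α - 1`
summands of `φ(z_n)`.
-/

namespace Finset

theorem sum_Icc_one_sub_add_sum_Icc_reflect {M : Type*} [AddCommMonoid M] (g : ℕ → M)
    {n a : ℕ} (ha : 1 ≤ a) (han : a ≤ n) :
    ∑ i ∈ Icc 1 (n - a), g i + ∑ k ∈ Icc 1 (a - 1), g (n - k) = ∑ i ∈ Icc 1 (n - 1), g i := by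
  have hreflect : ∑ k ∈ Icc 1 (a - 1), g (n - k) = ∑ i ∈ Ioc (n - a) (n - 1), g i := by
    apply sum_nbij' (fun k => n - k) (fun i => n - i) <;> intros <;>
      simp_all only [mem_Icc, mem_Ioc] <;> omega
  rw [hreflect, ← zero_add 1, Icc_add_one_left_eq_Ioc, Icc_add_one_left_eq_Ioc]
  exact sum_Ioc_consecutive g (Nat.zero_le _) (by omega)

end Finset

/-- The substitution `φ` of the chart map `c_1`; both the `z`- and the `u`-variables are
realized as `X j`, indexed by their subscripts. -/
noncomputable def chartC1 (n : ℕ) : ℕ → MvPolynomial ℕ ℤ := fun j =>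
  if 1 ≤ j ∧ j ≤ n - 1 then X (2 * j + 1)
  else if j = n then
    X 2 + ∑ i ∈ Finset.Icc 1 (n - 1), X (2 * i + 1) * X (2 * i + 2)
  else if n + 1 ≤ j ∧ j ≤ 2 * n - 1 then -X (2 * (2 * n + 1 - j))
  else 0

theorem chartC1_self (n : ℕ) :
    chartC1 n n = X 2 + ∑ i ∈ Finset.Icc 1 (n - 1), X (2 * i + 1) * X (2 * i + 2) := by
  rw [chartC1, if_neg (by omega), if_pos rfl]

theorem chartC1_sub_mul_chartC1_add {n k : ℕ} (hk : 1 ≤ k) (hkn : k < n) :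
    chartC1 n (n - k) * chartC1 n (n + k) = -(X (2 * (n - k) + 1) * X (2 * (n - k) + 2)) := by
  rw [chartC1, chartC1, if_pos (by omega), if_neg (by omega), if_neg (by omega),
    if_pos (by omega), show 2 * (2 * n + 1 - (n + k)) = 2 * (n - k) + 2 by omega, mul_neg]

theorem pullback_chartC1_general (n : ℕ) (α : ℕ) (hα1 : 1 ≤ α) (hαn : α ≤ n) :
    let f : ℕ → MvPolynomial ℕ ℤ := fun j =>
      if 1 ≤ j ∧ j ≤ n - 1 then X (2 * j + 1)
      else if j = n then
        X 2 + ∑ i ∈ Finset.Icc 1 (n - 1), X (2 * i + 1) * X (2 * i + 2)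
      else if n + 1 ≤ j ∧ j ≤ 2 * n - 1 then -X (2 * (2 * n + 1 - j))
      else 0
    MvPolynomial.aeval (R := ℤ) f
        (X n + ∑ k ∈ Finset.Icc 1 (α - 1), X (n - k) * X (n + k)) =
      X 2 + ∑ i ∈ Finset.Icc 1 (n - α), X (2 * i + 1) * X (2 * i + 2) := by
  show aeval (chartC1 n) _ = _
  have hpairs : ∀ k ∈ Finset.Icc 1 (α - 1), aeval (R := ℤ) (chartC1 n) (X (n - k) * X (n + k)) =
      -(X (2 * (n - k) + 1) * X (2 * (n - k) + 2)) := fun k hk => by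
    rw [Finset.mem_Icc] at hk
    rw [map_mul, aeval_X, aeval_X, chartC1_sub_mul_chartC1_add hk.1 (by omega)]
  rw [map_add, map_sum, Finset.sum_congr rfl hpairs, Finset.sum_neg_distrib, aeval_X,
    chartC1_self, ← Finset.sum_Icc_one_sub_add_sum_Icc_reflect
      (fun i => (X (2 * i + 1) * X (2 * i + 2) : MvPolynomial ℕ ℤ)) hα1 hαn]
  abel

/-- pullback along the chart map `c_1` in the proof of Proposition 5:
let `φ : ℤ[z_1,…,z_{2n-1}] → ℤ[u_2,…,u_{2n}]` be the ring homomorphism with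
`φ(z_j) = u_{2j+1}` for `1 ≤ j ≤ n-1`, `φ(z_n) = u_2 + Σ_{i=1}^{n-1} u_{2i+1} u_{2i+2}`
and `φ(z_j) = -u_{2(2n+1-j)}` for `n+1 ≤ j ≤ 2n-1` (here both the `z`-variables and
the `u`-variables are realized as the variables `X j` of `MvPolynomial ℕ ℤ`, indexed
by their subscripts). Then for every `1 ≤ α ≤ n`,
`φ(z_n + Σ_{k=1}^{α-1} z_{n-k} z_{n+k}) = u_2 + Σ_{i=1}^{n-α} u_{2i+1} u_{2i+2}`. -/
theorem pullback_chartC1 (n : ℕ) (hn : 2 ≤ n) (α : ℕ) (hα1 : 1 ≤ α) (hαn : α ≤ n) :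
    let f : ℕ → MvPolynomial ℕ ℤ := fun j =>
      if 1 ≤ j ∧ j ≤ n - 1 then X (2 * j + 1)
      else if j = n then
        X 2 + ∑ i ∈ Finset.Icc 1 (n - 1), X (2 * i + 1) * X (2 * i + 2)
      else if n + 1 ≤ j ∧ j ≤ 2 * n - 1 then -X (2 * (2 * n + 1 - j))
      else 0
    MvPolynomial.aeval (R := ℤ) f
        (X n + ∑ k ∈ Finset.Icc 1 (α - 1), X (n - k) * X (n + k)) =
      X 2 + ∑ i ∈ Finset.Icc 1 (n - α), X (2 * i + 1) * X (2 * i + 2) :=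
  pullback_chartC1_general n α hα1 hαn
end

section
/- Let n ≥ 2 and fix 2 ≤ i ≤ n. Let ψ : ℤ[z_1,…,z_{2n-1}] → ℤ[u_1, …, u_{2n}] be the ring homomorphism determined by: ψ(z_j) = u_{2i+2j-1} for 1 ≤ j ≤ n-i; ψ(z_{n-i+1}) = u_{2i} + Σ_{j=1, j≠i}^{n} u_{2j-1} u_{2j}; ψ(z_j) = -u_{4n-2i+4-2j} for n-i+2 ≤ j ≤ 2n-2i+1; ψ(z_j) = u_{4n-2i+1-2j} for 2n-2i+2 ≤ j ≤ 2n-i; and ψ(z_j) = u_{2(j-2n+i)} for 2n-i+1 ≤ j ≤ 2n-1. Then: (a) for every 1 ≤ α ≤ n-i+1, ψ(z_{n+1-i} + Σ_{k=1}^{α-1} z_{n+1-i-k} z_{n+1-i+k}) = u_{2i} + Σ_{j=1, j≠i}^{n-α+1} u_{2j-1} u_{2j}; (b) for every n-i+2 ≤ α ≤ n, ψ(Σ_{k=1}^{n+1-α} z_{2n+1-i-k} z_{2n-i+k}) = Σ_{j=1}^{n-α+1} u_{2j-1} u_{2j}; (c) ψ(z_{2n-i}) = u_1. (The pullback computations via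 the chart map c_{2i-1} in the proof of Proposition 5.) -/
open MvPolynomial

/-- pullback along the chart map `c_{2i-1}` in the proof of
Proposition 5: let `ψ : ℤ[z_1,…,z_{2n-1}] → ℤ[u_1,…,u_{2n}]` be the ring homomorphism
with `ψ(z_j) = u_{2i+2j-1}` for `1 ≤ j ≤ n-i`,
`ψ(z_{n-i+1}) = u_{2i} + Σ_{j=1,j≠i}^{n} u_{2j-1} u_{2j}`,
`ψ(z_j) = -u_{4n-2i+4-2j}` for `n-i+2 ≤ j ≤ 2n-2i+1`,
`ψ(z_j) = u_{4n-2i+1-2j}` for `2n-2i+2 ≤ j ≤ 2n-i`, and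
`ψ(z_j) = u_{2(j-2n+i)}` for `2n-i+1 ≤ j ≤ 2n-1` (both the `z`-variables and the
`u`-variables are realized as the variables `X j` of `MvPolynomial ℕ ℤ`, indexed by
their subscripts). Then the claims (a), (b), (c) hold. -/
theorem pullback_chartC2iSub1 (n : ℕ) (hn : 2 ≤ n) (i : ℕ) (hi2 : 2 ≤ i) (hin : i ≤ n) :
    let f : ℕ → MvPolynomial ℕ ℤ := fun j =>
      if 1 ≤ j ∧ j ≤ n - i then X (2 * i + 2 * j - 1)
      else if j = n - i + 1 then
        X (2 * i) + ∑ j' ∈ (Finset.Icc 1 n).erase i, X (2 * j' - 1) * X (2 * j')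
      else if n - i + 2 ≤ j ∧ j ≤ 2 * n - 2 * i + 1 then
        -X (4 * n - 2 * i + 4 - 2 * j)
      else if 2 * n - 2 * i + 2 ≤ j ∧ j ≤ 2 * n - i then
        X (4 * n - 2 * i + 1 - 2 * j)
      else if 2 * n - i + 1 ≤ j ∧ j ≤ 2 * n - 1 then X (2 * (j + i - 2 * n))
      else 0
    (∀ α : ℕ, 1 ≤ α → α ≤ n - i + 1 →
      MvPolynomial.aeval (R := ℤ) f
          (X (n + 1 - i) +
            ∑ k ∈ Finset.Icc 1 (α - 1), X (n + 1 - i - k) * X (n + 1 - i + k)) =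
        X (2 * i) +
          ∑ j ∈ (Finset.Icc 1 (n - α + 1)).erase i, X (2 * j - 1) * X (2 * j)) ∧
    (∀ α : ℕ, n - i + 2 ≤ α → α ≤ n →
      MvPolynomial.aeval (R := ℤ) f
          (∑ k ∈ Finset.Icc 1 (n + 1 - α), X (2 * n + 1 - i - k) * X (2 * n - i + k)) =
        ∑ j ∈ Finset.Icc 1 (n - α + 1), X (2 * j - 1) * X (2 * j)) ∧
    MvPolynomial.aeval (R := ℤ) f (X (2 * n - i)) = X 1 := by
  intro f
  refine ⟨?_, ?_, ?_⟩
  · -- (a)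
    intro α hα1 hα2
    simp only [map_add, map_sum, map_mul, aeval_X]
    have h1 : f (n + 1 - i) =
        X (2 * i) + ∑ j' ∈ (Finset.Icc 1 n).erase i, X (2 * j' - 1) * X (2 * j') := by
      simp only [f]
      rw [if_neg (by omega), if_pos (by omega)]
    have h2 : ∀ k ∈ Finset.Icc 1 (α - 1),
        f (n + 1 - i - k) * f (n + 1 - i + k) =
          -(X (2 * (n + 1 - k) - 1) * X (2 * (n + 1 - k))) := by
      intro k hk
      rw [Finset.mem_Icc] at hk
      simp only [f]
      rw [if_pos (by omega), if_neg (by omega), if_neg (by omega), if_pos (by omega)]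
      have e1 : 2 * i + 2 * (n + 1 - i - k) - 1 = 2 * (n + 1 - k) - 1 := by omega
      have e2 : 4 * n - 2 * i + 4 - 2 * (n + 1 - i + k) = 2 * (n + 1 - k) := by omega
      rw [e1, e2]
      ring
    rw [h1, Finset.sum_congr rfl h2, Finset.sum_neg_distrib]
    have hsplit : (Finset.Icc 1 n).erase i =
        (Finset.Icc 1 (n - α + 1)).erase i ∪ Finset.Icc (n - α + 2) n := by
      ext x
      simp only [Finset.mem_erase, Finset.mem_Icc, Finset.mem_union]
      omega
    have hdisj : Disjoint ((Finset.Icc 1 (n - α + 1)).erase i)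
        (Finset.Icc (n - α + 2) n) := by
      rw [Finset.disjoint_left]
      intro x hx hx'
      simp only [Finset.mem_erase, Finset.mem_Icc] at hx hx'
      omega
    rw [hsplit, Finset.sum_union hdisj]
    have hreidx : ∑ k ∈ Finset.Icc 1 (α - 1),
        X (2 * (n + 1 - k) - 1) * X (2 * (n + 1 - k)) =
        ∑ j ∈ Finset.Icc (n - α + 2) n, (X (2 * j - 1) * X (2 * j) : MvPolynomial ℕ ℤ) := by
      refine Finset.sum_nbij' (fun k => n + 1 - k) (fun j => n + 1 - j) ?_ ?_ ?_ ?_ ?_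
      · intro a ha; simp only [Finset.mem_Icc] at ha ⊢; omega
      · intro a ha; simp only [Finset.mem_Icc] at ha ⊢; omega
      · intro a ha; simp only [Finset.mem_Icc] at ha; show n + 1 - (n + 1 - a) = a; omega
      · intro a ha; simp only [Finset.mem_Icc] at ha; show n + 1 - (n + 1 - a) = a; omega
      · intro a _; rfl
    rw [hreidx]
    ring
  · -- (b)
    intro α hα1 hα2
    simp only [map_sum, map_mul, aeval_X]
    have h2 : ∀ k ∈ Finset.Icc 1 (n + 1 - α),
        f (2 * n + 1 - i - k) * f (2 * n - i + k) =
          X (2 * k - 1) * X (2 * k) := by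
      intro k hk
      rw [Finset.mem_Icc] at hk
      simp only [f]
      rw [if_neg (by omega), if_neg (by omega), if_neg (by omega), if_pos (by omega),
        if_neg (by omega), if_neg (by omega), if_neg (by omega), if_neg (by omega),
        if_pos (by omega)]
      have e1 : 4 * n - 2 * i + 1 - 2 * (2 * n + 1 - i - k) = 2 * k - 1 := by omega
      have e2 : 2 * (2 * n - i + k + i - 2 * n) = 2 * k := by omega
      rw [e1, e2]
    rw [Finset.sum_congr rfl h2, show n + 1 - α = n - α + 1 by omega]
  · -- (c)
    simp only [aeval_X]
    simp only [f]
    rw [if_neg (by omega), if_neg (by omega), if_neg (by omega), if_pos (by omega)]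
    congr 1
    omega
end
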